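/- Let k be a commutative ring, X a set, and Ω a semigroup, and let j : X → DTF(X,Ω) be the map j(x) = stree(x). Then (DTF(X,Ω), {≺_ω, ≻_ω | ω ∈ Ω}, ·), together with j, is the free tridendriform family algebra on X: for any tridendriform family algebra (T', {≺'_ω, ≻'_ω | ω ∈ Ω}, ·') over k and any map f : X → T', there is a unique k-linear map f̄ : DTF(X,Ω) → T' such that f̄(T ≺_ω U) = f̄(T) ≺'_ω f̄(U), f̄(T ≻_ω U) = f̄(T) ≻'_ω f̄(U) and f̄(T·U) = f̄(T) ·' f̄(U) for all T, U ∈ DTF(X,Ω) and ω ∈ Ω, and f = f̄ ∘ j. -/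

import Mathlib

/-- An `X`-valently decorated `Ω`-typed Schröder tree with at least one internal vertex.
`node c₀ mid xₘ cₘ` is the grafting `∨^{m+1}_{x₁,…,xₘ;(α₀,…,αₘ)}(T⁽⁰⁾,…,T⁽ᵐ⁾)`:
the root has children `c₀ = T⁽⁰⁾`, the children `T⁽¹⁾,…,T⁽ᵐ⁻¹⁾` listed in
`mid = [(x₁,T⁽¹⁾),…,(x_{m-1},T⁽ᵐ⁻¹⁾)]`, and the last child `cₘ = T⁽ᵐ⁾`; the root vertex
is decorated by `(x₁,…,xₘ) ∈ X^m`.  A child `none` is a leaf `|` (edge typed by the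
adjoined identity `1 ∈ Ω¹`), a child `some (t, α)` is a nonempty subtree with internal
edge typed `α ∈ Ω`. -/
inductive SchT (X Ω : Type) : Type where
  | node : Option (SchT X Ω × Ω) → List (X × Option (SchT X Ω × Ω)) → X →
      Option (SchT X Ω × Ω) → SchT X Ω

namespace SchT

variable {X Ω : Type}

/-- The single-vertex tree `stree x = ∨²_{x;(1,1)}(|,|)`. -/
def stree (x : X) : SchT X Ω := .node none [] x none

variable [Semigroup Ω] (k : Type) [CommRing k]

mutual
/-- `T ≺_ω U` on trees, with values in the free module on trees. -/
noncomputable def tprec : SchT X Ω → Ω → SchT X Ω → (SchT X Ω →₀ k)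
  | .node c0 mid xm none, ω, U => Finsupp.single (.node c0 mid xm (some (U, ω))) 1
  | .node c0 mid xm (some (t, α)), ω, U =>
      Finsupp.mapDomain (fun s => SchT.node c0 mid xm (some (s, α * ω)))
        (tsucc t α U + tprec t ω U + tdot t U)
  termination_by T _ U => sizeOf T + sizeOf U
  decreasing_by all_goals (simp_wf; omega)

/-- `T ≻_ω U` on trees, with values in the free module on trees. -/
noncomputable def tsucc : SchT X Ω → Ω → SchT X Ω → (SchT X Ω →₀ k)
  | T, ω, .node none mid yn dn => Finsupp.single (.node (some (T, ω)) mid yn dn) 1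
  | T, ω, .node (some (u, β)) mid yn dn =>
      Finsupp.mapDomain (fun s => SchT.node (some (s, ω * β)) mid yn dn)
        (tsucc T ω u + tprec T β u + tdot T u)
  termination_by T _ U => sizeOf T + sizeOf U
  decreasing_by all_goals (simp_wf; omega)

/-- `T · U` on trees, with values in the free module on trees. -/
noncomputable def tdot : SchT X Ω → SchT X Ω → (SchT X Ω →₀ k)
  | .node c0 mid xm none, .node none mid' yn dn =>
      Finsupp.single (.node c0 (mid ++ (xm, none) :: mid') yn dn) 1
  | .node c0 mid xm none, .node (some (u, β)) mid' yn dn =>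
      Finsupp.single (.node c0 (mid ++ (xm, some (u, β)) :: mid') yn dn) 1
  | .node c0 mid xm (some (t, α)), .node none mid' yn dn =>
      Finsupp.single (.node c0 (mid ++ (xm, some (t, α)) :: mid') yn dn) 1
  | .node c0 mid xm (some (t, α)), .node (some (u, β)) mid' yn dn =>
      Finsupp.mapDomain (fun s => SchT.node c0 (mid ++ (xm, some (s, α * β)) :: mid') yn dn)
        (tsucc t α u + tprec t β u + tdot t u)
  termination_by T U => sizeOf T + sizeOf U
  decreasing_by all_goals (simp_wf; omega)
end

/-- The bilinear extension of `≺_ω` to the free module `DTF(X,Ω) = SchT X Ω →₀ k`. -/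
noncomputable def dprec (ω : Ω) (a b : SchT X Ω →₀ k) : SchT X Ω →₀ k :=
  a.sum fun T ca => b.sum fun U cb => (ca * cb) • tprec k T ω U

/-- The bilinear extension of `≻_ω` to the free module `DTF(X,Ω) = SchT X Ω →₀ k`. -/
noncomputable def dsucc (ω : Ω) (a b : SchT X Ω →₀ k) : SchT X Ω →₀ k :=
  a.sum fun T ca => b.sum fun U cb => (ca * cb) • tsucc k T ω U

/-- The bilinear extension of `·` to the free module `DTF(X,Ω) = SchT X Ω →₀ k`. -/
noncomputable def dmul (a b : SchT X Ω →₀ k) : SchT X Ω →₀ k :=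
  a.sum fun T ca => b.sum fun U cb => (ca * cb) • tdot k T U

end SchT

/-!
Every tree is generated from the one-vertex trees `stree x` by the three operations: a
nonempty first child splits off as `t ≻_α (rest)`, a nonempty last child of a one-vertex root
as `stree x ≺_ω U`, and otherwise the first root decoration as `stree x₁ · (rest)`. Hence a
morphism extending `f` is unique, and reading these decompositions as a recursion defines the
candidate `liftTree` on trees. Its linear extension respects the operations by an induction
following the recursive definitions of `≺_ω`, `≻_ω` and `·`: once `liftTree` is known to split
off the last child (second and sixth identities) and to split a root at any decoration (fourth
and seventh), each recursive case is the first, third or fifth identity.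
-/

theorem LinearMap.map_finsuppSum_finsuppSum_smul {α R M N P : Type*} [CommSemiring R]
    [AddCommMonoid M] [Module R M] [AddCommMonoid N] [Module R N] [AddCommMonoid P] [Module R P]
    (L : P →ₗ[R] N) (B : M →ₗ[R] M →ₗ[R] N) (v : α → M) (F : α → α → P)
    (hF : ∀ T U, L (F T U) = B (v T) (v U)) (a b : α →₀ R) :
    L (a.sum fun T ca => b.sum fun U cb => (ca * cb) • F T U)
      = B (Finsupp.linearCombination R v a) (Finsupp.linearCombination R v b) := by
  simp only [map_finsuppSum, map_smul, hF, Finsupp.linearCombination_apply,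
    LinearMap.finsupp_sum_apply, LinearMap.smul_apply, Finsupp.smul_sum, smul_smul]
  rw [Finsupp.sum_comm]
  simp only [mul_comm]

namespace SchT

section Generation

variable {X Ω : Type} [Semigroup Ω] (k : Type) [CommRing k]

theorem single_node_some_eq_dsucc (t : SchT X Ω) (α : Ω)
    (mid : List (X × Option (SchT X Ω × Ω))) (x : X) (cm : Option (SchT X Ω × Ω)) :
    Finsupp.single (node (some (t, α)) mid x cm) (1 : k)
      = dsucc k α (Finsupp.single t 1) (Finsupp.single (node none mid x cm) 1) := by
  simp [dsucc, Finsupp.sum_single_index, tsucc]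

theorem single_node_nil_some_eq_dprec (x : X) (U : SchT X Ω) (ω : Ω) :
    Finsupp.single (node none [] x (some (U, ω))) (1 : k)
      = dprec k ω (Finsupp.single (stree x) 1) (Finsupp.single U 1) := by
  simp [dprec, Finsupp.sum_single_index, tprec, stree]

theorem single_node_cons_eq_dmul (x₁ : X) (c₁ : Option (SchT X Ω × Ω))
    (mid : List (X × Option (SchT X Ω × Ω))) (xm : X) (cm : Option (SchT X Ω × Ω)) :
    Finsupp.single (node none ((x₁, c₁) :: mid) xm cm) (1 : k)
      = dmul k (Finsupp.single (stree x₁) 1) (Finsupp.single (node c₁ mid xm cm) 1) := by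
  rcases c₁ with _ | ⟨u, β⟩ <;> simp [dmul, Finsupp.sum_single_index, tdot, stree]

end Generation

section Universal

variable {X Ω : Type} {k : Type} [CommRing k] {A : Type} [AddCommGroup A]
  [Module k A] (prec succ : Ω → A →ₗ[k] A →ₗ[k] A) (dot : A →ₗ[k] A →ₗ[k] A)

variable (f : X → A)

def liftTree : SchT X Ω → A
  | .node (some (t, α)) mid x cm => succ α (liftTree t) (liftTree (.node none mid x cm))
  | .node none [] x none => f x
  | .node none [] x (some (U, ω)) => prec ω (f x) (liftTree U)
  | .node none ((x₁, c₁) :: mid) xm cm => dot (f x₁) (liftTree (.node c₁ mid xm cm))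
  termination_by T => sizeOf T
  decreasing_by all_goals (simp_wf; omega)

local notation "φ" => liftTree prec succ dot f

variable {prec succ dot f}

@[simp]
theorem liftTree_node_some (t : SchT X Ω) (α : Ω) (mid : List (X × Option (SchT X Ω × Ω)))
    (x : X) (cm : Option (SchT X Ω × Ω)) :
    φ (.node (some (t, α)) mid x cm) = succ α (φ t) (φ (.node none mid x cm)) := by
  rw [liftTree]

@[simp]
theorem liftTree_stree (x : X) : φ (stree x) = f x := by
  rw [stree, liftTree]

variable (prec succ dot f) in
noncomputable def lift : (SchT X Ω →₀ k) →ₗ[k] A :=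
  Finsupp.linearCombination k φ

theorem lift_single_one (T : SchT X Ω) : lift prec succ dot f (Finsupp.single T 1) = φ T := by
  simp [lift]

theorem lift_single_stree (x : X) :
    lift prec succ dot f (Finsupp.single (stree x) 1) = f x := by
  rw [lift_single_one, liftTree_stree]

theorem lift_mapDomain (ℓ : A →ₗ[k] A) (g : SchT X Ω → SchT X Ω) (hg : ∀ s, φ (g s) = ℓ (φ s))
    (v : SchT X Ω →₀ k) :
    lift prec succ dot f (Finsupp.mapDomain g v) = ℓ (lift prec succ dot f v) := by
  rw [lift, Finsupp.linearCombination_mapDomain, Finsupp.apply_linearCombination]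
  exact congrArg (Finsupp.linearCombination k · v) (funext hg)

variable [Semigroup Ω]

variable (prec succ dot) in
structure IsTridendriformFamily : Prop where
  prec_prec : ∀ (α β : Ω) (x y z : A),
    prec β (prec α x y) z = prec (α * β) x (prec β y z + succ α y z + dot y z)
  prec_succ : ∀ (α β : Ω) (x y z : A), prec β (succ α x y) z = succ α x (prec β y z)
  succ_succ : ∀ (α β : Ω) (x y z : A),
    succ (α * β) (prec β x y + succ α x y + dot x y) z = succ α x (succ β y z)
  dot_succ : ∀ (α : Ω) (x y z : A), dot (succ α x y) z = succ α x (dot y z)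
  dot_prec : ∀ (α : Ω) (x y z : A), dot (prec α x y) z = dot x (succ α y z)
  prec_dot : ∀ (α : Ω) (x y z : A), prec α (dot x y) z = dot x (prec α y z)
  dot_assoc : ∀ x y z : A, dot (dot x y) z = dot x (dot y z)

theorem liftTree_node_last_some (hA : IsTridendriformFamily prec succ dot)
    (c₀ : Option (SchT X Ω × Ω)) (mid : List (X × Option (SchT X Ω × Ω))) (xm : X)
    (U : SchT X Ω) (ω : Ω) :
    φ (.node c₀ mid xm (some (U, ω))) = prec ω (φ (.node c₀ mid xm none)) (φ U) := by
  induction mid generalizing c₀ with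
  | nil =>
    rcases c₀ with _ | ⟨t, α⟩
    · simp [liftTree]
    · simp [liftTree, hA.prec_succ]
  | cons hd tl ih =>
    obtain ⟨x₁, c₁⟩ := hd
    rcases c₀ with _ | ⟨t, α⟩
    · simp [liftTree, ih, hA.prec_dot]
    · simp [liftTree, ih, hA.prec_succ, hA.prec_dot]

theorem liftTree_node_append (hA : IsTridendriformFamily prec succ dot)
    (c₀ : Option (SchT X Ω × Ω)) (mid : List (X × Option (SchT X Ω × Ω))) (xm : X)
    (d₀ : Option (SchT X Ω × Ω)) (mid' : List (X × Option (SchT X Ω × Ω))) (yn : X)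
    (dn : Option (SchT X Ω × Ω)) :
    φ (.node c₀ (mid ++ (xm, d₀) :: mid') yn dn)
      = dot (φ (.node c₀ mid xm none)) (φ (.node d₀ mid' yn dn)) := by
  induction mid generalizing c₀ with
  | nil =>
    rcases c₀ with _ | ⟨t, α⟩
    · simp [liftTree]
    · simp [liftTree, hA.dot_succ]
  | cons hd tl ih =>
    obtain ⟨x₁, c₁⟩ := hd
    rcases c₀ with _ | ⟨t, α⟩
    · simp [liftTree, ih, hA.dot_assoc]
    · simp [liftTree, ih, hA.dot_succ, hA.dot_assoc]

mutual

theorem lift_tprec (hA : IsTridendriformFamily prec succ dot) :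
    ∀ (T : SchT X Ω) (ω : Ω) (U : SchT X Ω),
      lift prec succ dot f (tprec k T ω U) = prec ω (φ T) (φ U)
  | .node c₀ mid xm none, ω, U => by
    rw [tprec, lift_single_one, liftTree_node_last_some hA]
  | .node c₀ mid xm (some (t, α)), ω, U => by
    rw [tprec, lift_mapDomain (prec (α * ω) (φ (.node c₀ mid xm none))) _
        (fun s => liftTree_node_last_some hA c₀ mid xm s (α * ω)),
      map_add (lift prec succ dot f),
      map_add (lift prec succ dot f), lift_tsucc hA t α U, lift_tprec hA t ω U, lift_tdot hA t U,
      liftTree_node_last_some hA c₀ mid xm t α, hA.prec_prec, add_comm (succ α (φ t) (φ U))]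
  termination_by T _ U => sizeOf T + sizeOf U
  decreasing_by all_goals (simp_wf; omega)

theorem lift_tsucc (hA : IsTridendriformFamily prec succ dot) :
    ∀ (T : SchT X Ω) (ω : Ω) (U : SchT X Ω),
      lift prec succ dot f (tsucc k T ω U) = succ ω (φ T) (φ U)
  | T, ω, .node none mid yn dn => by
    rw [tsucc, lift_single_one, liftTree_node_some]
  | T, ω, .node (some (u, β)) mid yn dn => by
    rw [tsucc, lift_mapDomain ((succ (ω * β)).flip (φ (.node none mid yn dn))) _
        (fun s => liftTree_node_some s (ω * β) mid yn dn),
      map_add (lift prec succ dot f),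
      map_add (lift prec succ dot f), lift_tsucc hA T ω u, lift_tprec hA T β u, lift_tdot hA T u,
      liftTree_node_some, ← hA.succ_succ, LinearMap.flip_apply, add_comm (succ ω (φ T) (φ u))]
  termination_by T _ U => sizeOf T + sizeOf U
  decreasing_by all_goals (simp_wf; omega)

theorem lift_tdot (hA : IsTridendriformFamily prec succ dot) :
    ∀ T U : SchT X Ω, lift prec succ dot f (tdot k T U) = dot (φ T) (φ U)
  | .node c₀ mid xm none, .node none mid' yn dn => by
    rw [tdot, lift_single_one, liftTree_node_append hA]
  | .node c₀ mid xm none, .node (some (u, β)) mid' yn dn => by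
    rw [tdot, lift_single_one, liftTree_node_append hA]
  | .node c₀ mid xm (some (t, α)), .node none mid' yn dn => by
    rw [tdot, lift_single_one, liftTree_node_append hA, liftTree_node_last_some hA,
      hA.dot_prec, liftTree_node_some]
  | .node c₀ mid xm (some (t, α)), .node (some (u, β)) mid' yn dn => by
    rw [tdot, lift_mapDomain ((dot (φ (.node c₀ mid xm none))).comp
          ((succ (α * β)).flip (φ (.node none mid' yn dn)))) _
        (fun s => by rw [liftTree_node_append hA, liftTree_node_some]; rfl),
      map_add (lift prec succ dot f),
      map_add (lift prec succ dot f), lift_tsucc hA t α u, lift_tprec hA t β u, lift_tdot hA t u,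
      liftTree_node_last_some hA, liftTree_node_some, hA.dot_prec, ← hA.succ_succ]
    rw [LinearMap.comp_apply, LinearMap.flip_apply, add_comm (succ α (φ t) (φ u))]
  termination_by T U => sizeOf T + sizeOf U
  decreasing_by all_goals (simp_wf; omega)

end

theorem lift_dprec (hA : IsTridendriformFamily prec succ dot) (ω : Ω) (a b : SchT X Ω →₀ k) :
    lift prec succ dot f (dprec k ω a b)
      = prec ω (lift prec succ dot f a) (lift prec succ dot f b) :=
  LinearMap.map_finsuppSum_finsuppSum_smul _ _ _ _ (fun T U => lift_tprec hA T ω U) a b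

theorem lift_dsucc (hA : IsTridendriformFamily prec succ dot) (ω : Ω) (a b : SchT X Ω →₀ k) :
    lift prec succ dot f (dsucc k ω a b)
      = succ ω (lift prec succ dot f a) (lift prec succ dot f b) :=
  LinearMap.map_finsuppSum_finsuppSum_smul _ _ _ _ (fun T U => lift_tsucc hA T ω U) a b

theorem lift_dmul (hA : IsTridendriformFamily prec succ dot) (a b : SchT X Ω →₀ k) :
    lift prec succ dot f (dmul k a b) = dot (lift prec succ dot f a) (lift prec succ dot f b) :=
  LinearMap.map_finsuppSum_finsuppSum_smul _ _ _ _ (fun T U => lift_tdot hA T U) a b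

theorem apply_single_eq_liftTree (g : (SchT X Ω →₀ k) →ₗ[k] A)
    (hp : ∀ (ω : Ω) (a b : SchT X Ω →₀ k), g (dprec k ω a b) = prec ω (g a) (g b))
    (hs : ∀ (ω : Ω) (a b : SchT X Ω →₀ k), g (dsucc k ω a b) = succ ω (g a) (g b))
    (hd : ∀ a b : SchT X Ω →₀ k, g (dmul k a b) = dot (g a) (g b))
    (hf : ∀ x : X, g (Finsupp.single (stree x) 1) = f x) :
    ∀ T : SchT X Ω, g (Finsupp.single T 1) = φ T
  | .node (some (t, α)) mid x cm => by
    rw [single_node_some_eq_dsucc, hs, apply_single_eq_liftTree g hp hs hd hf t,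
      apply_single_eq_liftTree g hp hs hd hf (.node none mid x cm), liftTree_node_some]
  | .node none [] x none => (hf x).trans (liftTree_stree x).symm
  | .node none [] x (some (U, ω)) => by
    rw [single_node_nil_some_eq_dprec, hp, hf, apply_single_eq_liftTree g hp hs hd hf U, liftTree]
  | .node none ((x₁, c₁) :: mid) xm cm => by
    rw [single_node_cons_eq_dmul, hd, hf,
      apply_single_eq_liftTree g hp hs hd hf (.node c₁ mid xm cm), liftTree]
  termination_by T => sizeOf T
  decreasing_by all_goals (simp_wf; omega)

theorem eq_lift (g : (SchT X Ω →₀ k) →ₗ[k] A)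
    (hp : ∀ (ω : Ω) (a b : SchT X Ω →₀ k), g (dprec k ω a b) = prec ω (g a) (g b))
    (hs : ∀ (ω : Ω) (a b : SchT X Ω →₀ k), g (dsucc k ω a b) = succ ω (g a) (g b))
    (hd : ∀ a b : SchT X Ω →₀ k, g (dmul k a b) = dot (g a) (g b))
    (hf : ∀ x : X, g (Finsupp.single (stree x) 1) = f x) :
    g = lift prec succ dot f :=
  Finsupp.basisSingleOne.ext fun T => by
    rw [Finsupp.coe_basisSingleOne, apply_single_eq_liftTree g hp hs hd hf, lift_single_one]

end Universal

end SchT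

open SchT in
/-- `DTF(X,Ω)`, together with `j : x ↦ stree x`, is the free
tridendriform family algebra on `X`: for every tridendriform family algebra
`(T', {≺'_ω, ≻'_ω}, ·')` over `k` and every map `f : X → T'` there is a unique
`k`-linear map `f̄ : DTF(X,Ω) → T'` respecting the three families of operations and
satisfying `f̄ ∘ j = f`. -/
theorem DTF_free_tridendriformFamily {X Ω : Type} [Semigroup Ω] (k : Type) [CommRing k]
    {T' : Type} [AddCommGroup T'] [Module k T']
    (prec' succ' : Ω → T' →ₗ[k] T' →ₗ[k] T') (dot' : T' →ₗ[k] T' →ₗ[k] T')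
    (h1 : ∀ (α β : Ω) (x y z : T'),
      prec' β (prec' α x y) z
        = prec' (α * β) x (prec' β y z + succ' α y z + dot' y z))
    (h2 : ∀ (α β : Ω) (x y z : T'),
      prec' β (succ' α x y) z = succ' α x (prec' β y z))
    (h3 : ∀ (α β : Ω) (x y z : T'),
      succ' (α * β) (prec' β x y + succ' α x y + dot' x y) z = succ' α x (succ' β y z))
    (h4 : ∀ (α : Ω) (x y z : T'), dot' (succ' α x y) z = succ' α x (dot' y z))
    (h5 : ∀ (α : Ω) (x y z : T'), dot' (prec' α x y) z = dot' x (succ' α y z))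
    (h6 : ∀ (α : Ω) (x y z : T'), prec' α (dot' x y) z = dot' x (prec' α y z))
    (h7 : ∀ x y z : T', dot' (dot' x y) z = dot' x (dot' y z))
    (f : X → T') :
    ∃! fbar : (SchT X Ω →₀ k) →ₗ[k] T',
      (∀ (ω : Ω) (a b : SchT X Ω →₀ k),
        fbar (dprec k ω a b) = prec' ω (fbar a) (fbar b)) ∧
      (∀ (ω : Ω) (a b : SchT X Ω →₀ k),
        fbar (dsucc k ω a b) = succ' ω (fbar a) (fbar b)) ∧
      (∀ a b : SchT X Ω →₀ k, fbar (dmul k a b) = dot' (fbar a) (fbar b)) ∧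
      (∀ x : X, fbar (Finsupp.single (stree x) (1 : k)) = f x) := by
  have hA : IsTridendriformFamily prec' succ' dot' := ⟨h1, h2, h3, h4, h5, h6, h7⟩
  refine ⟨lift prec' succ' dot' f,
    ⟨lift_dprec hA, lift_dsucc hA, lift_dmul hA, lift_single_stree⟩, ?_⟩
  rintro g ⟨hp, hs, hd, hf⟩
  exact eq_lift g hp hs hd hf
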